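/- arXiv:1012.5024 — 3 statements merged into one kernel-verified Lean document; each statement's English description precedes it below -/
import Mathlib

section
/- Given a 3-SAT instance with variables x_1, ..., x_n and clauses C_1, ..., C_m, construct the labeled directed graph G as follows: labels are literals (variable-polarity pairs). Vertices are s = u_0, u_1, ..., u_n = w_0, w_1, ..., w_m = t. For each variable x_j there are two parallel paths from u_{j-1} to u_j, one whose edges are labeled with the positive literal x_j (repeated once per occurrence of x_j in clauses, or a single edge labeled x_j), and one labeled with the negative literal ¬x_j. For each clause C_i there are three parallel edges from w_{i-1} to w_i, labeled with the three literals of C_i. Then there exists a path from s to t in G with pairwise distinct edge labels if and only if the 3-SAT formula is satisfiable. -/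
structure LabeledGraph (V E L : Type) where
  src : E → V
  tgt : E → V
  lab : E → L

variable {V E L : Type}

def IsWalk (G : LabeledGraph V E L) : V → V → List E → Prop
  | s, t, [] => s = t
  | s, t, e :: es => G.src e = s ∧ IsWalk G (G.tgt e) t es

def Feasible (G : LabeledGraph V E L) (p : List E) : Prop :=
  (p.map G.lab).Nodup

/-! ## The 3-SAT to SPUL reduction graph

A 3-SAT instance with `n` variables and `m` clauses is given by
`C : Fin m → Fin 3 → Fin n × Bool`, where `C i k = (j, b)` means the `k`-th
literal of clause `C_i` is variable `x_j` with polarity `b`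
(`b = true` : positive literal `x_j`; `b = false` : negated literal `¬x_j`). -/

/-- The list of occurrences (clause index, position) of the literal `(j, b)`. -/
def occList {n m : ℕ} (C : Fin m → Fin 3 → Fin n × Bool) (j : Fin n) (b : Bool) :
    List (Fin m × Fin 3) :=
  ((List.finRange m) ×ˢ (List.finRange 3)).filter (fun q => C q.1 q.2 = (j, b))

/-- Number of edges of the branch of the variable gadget for `x_j` carrying
polarity `b`: one edge per occurrence of the literal `(j, b)` in the clauses,
or a single (dummy-labeled) edge if the literal does not occur. -/
def branchLen {n m : ℕ} (C : Fin m → Fin 3 → Fin n × Bool) (j : Fin n) (b : Bool) : ℕ :=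
  max 1 (occList C j b).length

/-- Vertices of the reduction graph: the junction vertices
`s = u_0, u_1, …, u_n = w_0, w_1, …, w_m = t` (as `Fin (n+m+1)`, where `u_j` is
junction `j` and `w_i` is junction `n + i`), together with internal vertices of
the variable-gadget branches. -/
abbrev RedV {n m : ℕ} (C : Fin m → Fin 3 → Fin n × Bool) : Type :=
  Fin (n + m + 1) ⊕ (Σ j : Fin n, Σ b : Bool, Fin (branchLen C j b))

/-- Edges of the reduction graph: `inl ⟨j, b, r⟩` is the `r`-th edge of the
branch of variable gadget `x_j` with polarity `b`; `inr (i, k)` is the clause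
edge for the `k`-th literal of clause `C_i`. -/
abbrev RedE {n m : ℕ} (C : Fin m → Fin 3 → Fin n × Bool) : Type :=
  (Σ j : Fin n, Σ b : Bool, Fin (branchLen C j b)) ⊕ (Fin m × Fin 3)

/-- Labels: `inl (i, k)` identifies the occurrence of a literal at position `k`
of clause `C_i` (this label appears both on the corresponding variable-branch
edge and on the corresponding clause edge); `inr (j, b)` is the dummy label for
the branch of a literal occurring in no clause. -/
abbrev RedL (n m : ℕ) : Type := (Fin m × Fin 3) ⊕ (Fin n × Bool)

/-- The reduction graph: in series, for each variable `x_j` two parallel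
branches from `u_{j-1}` to `u_j` (the branch of polarity `b` being a directed
path whose edges carry the labels of the occurrences of literal `(j, b)`),
followed by, for each clause `C_i`, three parallel edges from `w_{i-1}` to
`w_i` labeled by the three literal occurrences of `C_i`. -/
def redGraph (n m : ℕ) (C : Fin m → Fin 3 → Fin n × Bool) :
    LabeledGraph (RedV C) (RedE C) (RedL n m) where
  src e :=
    match e with
    | Sum.inl ⟨j, b, r⟩ =>
        if r.val = 0 then Sum.inl ⟨j.val, by have := j.isLt; omega⟩
        else Sum.inr ⟨j, b, ⟨r.val - 1, by have := r.isLt; omega⟩⟩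
    | Sum.inr (i, _) => Sum.inl ⟨n + i.val, by have := i.isLt; omega⟩
  tgt e :=
    match e with
    | Sum.inl ⟨j, b, r⟩ =>
        if r.val = branchLen C j b - 1 then Sum.inl ⟨j.val + 1, by have := j.isLt; omega⟩
        else Sum.inr ⟨j, b, r⟩
    | Sum.inr (i, _) => Sum.inl ⟨n + i.val + 1, by have := i.isLt; omega⟩
  lab e :=
    match e with
    | Sum.inl ⟨j, b, r⟩ =>
        if h : occList C j b = [] then Sum.inr (j, b)
        else Sum.inl ((occList C j b).getD r.val ((occList C j b).head h))
    | Sum.inr q => Sum.inl q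

/-- Start vertex `s = u_0`. -/
def redS (n m : ℕ) (C : Fin m → Fin 3 → Fin n × Bool) : RedV C :=
  Sum.inl ⟨0, by omega⟩

/-- Target vertex `t = w_m`. -/
def redT (n m : ℕ) (C : Fin m → Fin 3 → Fin n × Bool) : RedV C :=
  Sum.inl ⟨n + m, by omega⟩

/-!
A walk from `s` to `t` must cross every junction, so it enters one branch of every variable
gadget and uses one edge of every clause gadget. A branch, once entered, is followed to its end,
since each of its internal vertices has a single outgoing edge; so the branch taken for `x_j`
uses up the labels of all occurrences of one literal of `x_j`, and the clause edges can only carry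
occurrences of the opposite literals. Setting `x_j` to the polarity of the branch not taken thus
satisfies every clause. Conversely, for a satisfying assignment, take in every variable gadget the
branch of the false literal and in every clause gadget an edge of a true literal.
-/

section Walks
variable (G : LabeledGraph V E L)

theorem isWalk_append {u v w : V} {p q : List E} (hp : IsWalk G u v p) (hq : IsWalk G v w q) :
    IsWalk G u w (p ++ q) := by
  induction p generalizing u with
  | nil => cases hp; exact hq
  | cons e es ih => exact ⟨hp.1, ih hp.2⟩

theorem isWalk_flatMap_finRange {c : ℕ} (g : ℕ → V) (P : Fin c → List E)
    (h : ∀ a : Fin c, IsWalk G (g a) (g (a + 1)) (P a)) :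
    IsWalk G (g 0) (g c) ((List.finRange c).flatMap P) := by
  induction c generalizing g with
  | zero => rfl
  | succ c ih =>
    rw [List.finRange_succ, List.flatMap_cons, List.flatMap_map]
    exact isWalk_append G (h 0) (ih (fun a => g (a + 1)) (fun a => P a.succ) fun a => h a.succ)

theorem isWalk_map_finRange {c : ℕ} (g : ℕ → V) (e : Fin c → E)
    (h : ∀ a : Fin c, G.src (e a) = g a ∧ G.tgt (e a) = g (a + 1)) :
    IsWalk G (g 0) (g c) ((List.finRange c).map e) := by
  rw [List.map_eq_flatMap]
  exact isWalk_flatMap_finRange G g _ h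

variable {G} in
theorem IsWalk.exists_crossing (P : V → Prop) {u v : V} {p : List E} (hp : IsWalk G u v p)
    (hu : P u) (hv : ¬ P v) : ∃ e ∈ p, P (G.src e) ∧ ¬ P (G.tgt e) := by
  induction p generalizing u with
  | nil => exact absurd (hp ▸ hu) hv
  | cons e es ih =>
    by_cases he : P (G.tgt e)
    · obtain ⟨e', he', hcross⟩ := ih hp.2 he
      exact ⟨e', List.mem_cons_of_mem e he', hcross⟩
    · exact ⟨e, List.mem_cons_self, hp.1 ▸ hu, he⟩

variable {G} in
theorem IsWalk.exists_src_eq_tgt {u v : V} {p : List E} (hp : IsWalk G u v p) {e : E}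
    (he : e ∈ p) (hev : G.tgt e ≠ v) : ∃ e' ∈ p, G.src e' = G.tgt e := by
  induction p generalizing u with
  | nil => simp at he
  | cons f fs ih =>
    rcases List.mem_cons.mp he with rfl | he
    · cases fs with
      | nil => exact absurd hp.2 hev
      | cons f' _ => exact ⟨f', by simp, hp.2.1⟩
    · obtain ⟨e', he', h⟩ := ih hp.2 he
      exact ⟨e', List.mem_cons_of_mem f he', h⟩

end Walks

theorem List.nodup_flatMap_of_index {ι α : Type*} {l : List ι} {f : ι → List α} (idx : α → ι)
    (hl : l.Nodup) (hf : ∀ a ∈ l, (f a).Nodup) (hidx : ∀ a ∈ l, ∀ x ∈ f a, idx x = a) :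
    (l.flatMap f).Nodup :=
  List.nodup_flatMap.2 ⟨hf, hl.pairwise_of_forall_ne fun a ha b hb hab x hxa hxb =>
    hab ((hidx a ha x hxa).symm.trans (hidx b hb x hxb))⟩

section Reduction
variable {n m : ℕ} {C : Fin m → Fin 3 → Fin n × Bool}

/-- Junction `a` of the series composition, clamped to `n + m` so that it is total in `a`. -/
def junction (C : Fin m → Fin 3 → Fin n × Bool) (a : ℕ) : RedV C :=
  Sum.inl ⟨min a (n + m), by omega⟩

/-- Vertex `r` (for `r ≤ branchLen C j b`) of the branch of polarity `b` of the gadget of `x_j`;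
it is the source of edge `r` and the target of edge `r - 1` of that branch. -/
def branchVertex (C : Fin m → Fin 3 → Fin n × Bool) (j : Fin n) (b : Bool) (r : ℕ) : RedV C :=
  if r = 0 then junction C j
  else if h : r < branchLen C j b then Sum.inr ⟨j, b, ⟨r - 1, by omega⟩⟩
  else junction C (j + 1)

/-- Junction `a` is the only vertex of level `2 * a`, so an edge crossing that level leaves it. -/
def level : RedV C → ℕ
  | Sum.inl u => 2 * u
  | Sum.inr s => 2 * s.1 + 1

theorem junction_of_le {a : ℕ} (h : a ≤ n + m) : junction C a = Sum.inl ⟨a, by omega⟩ := by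
  simp only [junction, Nat.min_eq_left h]

theorem redS_eq_junction : redS n m C = junction C 0 :=
  (junction_of_le (Nat.zero_le _)).symm

theorem redT_eq_junction : redT n m C = junction C (n + m) :=
  (junction_of_le le_rfl).symm

theorem level_junction (a : ℕ) : level (junction C a) = 2 * min a (n + m) := rfl

theorem level_branchVertex (j : Fin n) (b : Bool) (r : ℕ) :
    level (branchVertex C j b r) =
      if r = 0 then 2 * (j : ℕ) else if r < branchLen C j b then 2 * j + 1 else 2 * j + 2 := by
  have := j.isLt
  unfold branchVertex
  split_ifs <;> first | (rw [level_junction]; omega) | rfl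

theorem redGraph_src_branch (j : Fin n) (b : Bool) (r : Fin (branchLen C j b)) :
    (redGraph n m C).src (Sum.inl ⟨j, b, r⟩) = branchVertex C j b r := by
  have := r.isLt
  simp only [redGraph, branchVertex]
  split_ifs
  · exact (junction_of_le (by omega)).symm
  · rfl

theorem redGraph_tgt_branch (j : Fin n) (b : Bool) (r : Fin (branchLen C j b)) :
    (redGraph n m C).tgt (Sum.inl ⟨j, b, r⟩) = branchVertex C j b (r + 1) := by
  have := r.isLt
  have := j.isLt
  by_cases hr : r.val = branchLen C j b - 1
  · simp only [redGraph, hr, if_true, branchVertex, Nat.add_eq_zero_iff, one_ne_zero,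
      and_false, if_false]
    rw [dif_neg (by omega), junction_of_le (by omega)]
  · simp only [redGraph, hr, if_false, branchVertex, Nat.add_eq_zero_iff, one_ne_zero,
      and_false]
    rw [dif_pos (by omega)]
    rfl

theorem redGraph_src_clause (i : Fin m) (k : Fin 3) :
    (redGraph n m C).src (Sum.inr (i, k)) = junction C (n + i) :=
  (junction_of_le (by omega)).symm

theorem redGraph_tgt_clause (i : Fin m) (k : Fin 3) :
    (redGraph n m C).tgt (Sum.inr (i, k)) = junction C (n + i + 1) :=
  (junction_of_le (by omega)).symm

theorem branchLen_pos (j : Fin n) (b : Bool) : 0 < branchLen C j b :=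
  lt_max_of_lt_left one_pos

theorem mem_occList {i : Fin m} {k : Fin 3} {j : Fin n} {b : Bool} :
    (i, k) ∈ occList C j b ↔ C i k = (j, b) := by
  simp [occList, List.mem_product]

theorem exists_redGraph_lab_branch_eq {i : Fin m} {k : Fin 3} {j : Fin n} {b : Bool}
    (h : C i k = (j, b)) : ∃ r, (redGraph n m C).lab (Sum.inl ⟨j, b, r⟩) = Sum.inl (i, k) := by
  have hmem : (i, k) ∈ occList C j b := mem_occList.2 h
  obtain ⟨r, hr, hget⟩ := List.mem_iff_getElem.1 hmem
  refine ⟨⟨r, lt_of_lt_of_le hr (le_max_right _ _)⟩, ?_⟩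
  simp only [redGraph, dif_neg (List.ne_nil_of_mem hmem), List.getD_eq_getElem _ _ hr, hget]

theorem branchLen_eq_length {j : Fin n} {b : Bool} (h : occList C j b ≠ []) :
    branchLen C j b = (occList C j b).length :=
  max_eq_right (List.length_pos_iff.2 h)

theorem edge_eq_of_level_cross {e : RedE C} {a : ℕ}
    (h1 : level ((redGraph n m C).src e) ≤ 2 * a) (h2 : 2 * a < level ((redGraph n m C).tgt e)) :
    (∃ (j : Fin n) (b : Bool), (j : ℕ) = a ∧ e = Sum.inl ⟨j, b, ⟨0, branchLen_pos j b⟩⟩) ∨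
      ∃ (i : Fin m) (k : Fin 3), n + (i : ℕ) = a ∧ e = Sum.inr (i, k) := by
  rcases e with ⟨j, b, r⟩ | ⟨i, k⟩
  · rw [redGraph_src_branch, level_branchVertex] at h1
    rw [redGraph_tgt_branch, level_branchVertex] at h2
    have hr : (r : ℕ) = 0 := by split_ifs at h1 h2 <;> omega
    obtain rfl : r = ⟨0, branchLen_pos j b⟩ := Fin.ext hr
    exact Or.inl ⟨j, b, by split_ifs at h1 h2 <;> omega, rfl⟩
  · rw [redGraph_src_clause, level_junction] at h1
    rw [redGraph_tgt_clause, level_junction] at h2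
    exact Or.inr ⟨i, k, by omega, rfl⟩

section Walk
variable {p : List (RedE C)}

theorem exists_level_cross (hw : IsWalk (redGraph n m C) (redS n m C) (redT n m C) p)
    {a : ℕ} (ha : a < n + m) :
    ∃ e ∈ p, level ((redGraph n m C).src e) ≤ 2 * a ∧
      2 * a < level ((redGraph n m C).tgt e) := by
  obtain ⟨e, he, h1, h2⟩ := hw.exists_crossing (fun v => level v ≤ 2 * a)
    (by rw [redS_eq_junction, level_junction]; omega)
    (by rw [redT_eq_junction, level_junction]; omega)
  exact ⟨e, he, h1, not_le.mp h2⟩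

theorem exists_branch_start_mem (hw : IsWalk (redGraph n m C) (redS n m C) (redT n m C) p)
    (j : Fin n) : ∃ b, Sum.inl ⟨j, b, ⟨0, branchLen_pos j b⟩⟩ ∈ p := by
  obtain ⟨e, he, h1, h2⟩ := exists_level_cross hw (a := j) (by omega)
  rcases edge_eq_of_level_cross h1 h2 with ⟨j', b, hj, rfl⟩ | ⟨i, k, hi, -⟩
  · obtain rfl := Fin.ext hj
    exact ⟨b, he⟩
  · omega

theorem exists_clause_edge_mem (hw : IsWalk (redGraph n m C) (redS n m C) (redT n m C) p)
    (i : Fin m) : ∃ k, Sum.inr (i, k) ∈ p := by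
  obtain ⟨e, he, h1, h2⟩ := exists_level_cross hw (a := n + i) (by omega)
  rcases edge_eq_of_level_cross h1 h2 with ⟨j, b, hj, -⟩ | ⟨i', k, hi, rfl⟩
  · omega
  · obtain rfl := Fin.ext (Nat.add_left_cancel hi)
    exact ⟨k, he⟩

theorem branch_succ_mem {u : RedV C} (hw : IsWalk (redGraph n m C) u (redT n m C) p)
    {j : Fin n} {b : Bool} {r : ℕ} (hr : r + 1 < branchLen C j b)
    (h : Sum.inl ⟨j, b, ⟨r, by omega⟩⟩ ∈ p) : Sum.inl ⟨j, b, ⟨r + 1, hr⟩⟩ ∈ p := by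
  have htgt : (redGraph n m C).tgt (Sum.inl ⟨j, b, ⟨r, by omega⟩⟩) =
      Sum.inr ⟨j, b, ⟨r, by omega⟩⟩ := by
    rw [redGraph_tgt_branch, branchVertex, if_neg (by omega), dif_pos hr]
    rfl
  obtain ⟨e, he, hsrc⟩ := hw.exists_src_eq_tgt h (by rw [htgt]; simp [redT])
  rw [htgt] at hsrc
  rcases e with ⟨j', b', r'⟩ | ⟨i, k⟩
  · rw [redGraph_src_branch, branchVertex] at hsrc
    split_ifs at hsrc with h0 h1
    · simp [junction] at hsrc
    · simp only [Sum.inr.injEq, Sigma.mk.injEq] at hsrc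
      obtain ⟨rfl, hsrc⟩ := hsrc
      simp only [heq_eq_eq, Sigma.mk.injEq] at hsrc
      obtain ⟨rfl, hsrc⟩ := hsrc
      have hval : (r' : ℕ) - 1 = r := congrArg Fin.val (eq_of_heq hsrc)
      obtain rfl : r' = ⟨r + 1, hr⟩ := Fin.ext (show (r' : ℕ) = r + 1 by omega)
      exact he
    · simp [junction] at hsrc
  · rw [redGraph_src_clause] at hsrc
    simp [junction] at hsrc

theorem branch_mem_of_start_mem {u : RedV C} (hw : IsWalk (redGraph n m C) u (redT n m C) p)
    {j : Fin n} {b : Bool} (h : Sum.inl ⟨j, b, ⟨0, branchLen_pos j b⟩⟩ ∈ p)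
    (r : Fin (branchLen C j b)) : Sum.inl ⟨j, b, r⟩ ∈ p := by
  obtain ⟨r, hr⟩ := r
  induction r with
  | zero => exact h
  | succ r ih => exact branch_succ_mem hw hr (ih (by omega))

theorem satisfiable_of_feasible_walk (hw : IsWalk (redGraph n m C) (redS n m C) (redT n m C) p)
    (hf : Feasible (redGraph n m C) p) :
    ∃ σ : Fin n → Bool, ∀ i, ∃ k, σ (C i k).1 = (C i k).2 := by
  choose b hb using exists_branch_start_mem hw
  refine ⟨fun j => !b j, fun i => ?_⟩
  obtain ⟨k, hk⟩ := exists_clause_edge_mem hw i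
  refine ⟨k, ?_⟩
  rcases hC : C i k with ⟨j, c⟩
  obtain ⟨r, hr⟩ := exists_redGraph_lab_branch_eq hC
  have hne : b j ≠ c := by
    rintro rfl
    have := List.inj_on_of_nodup_map hf (branch_mem_of_start_mem hw (hb j) r) hk hr
    simp at this
  cases b j <;> cases c <;> simp_all

end Walk

def branchEdges (C : Fin m → Fin 3 → Fin n × Bool) (j : Fin n) (b : Bool) : List (RedE C) :=
  (List.finRange (branchLen C j b)).map fun r => Sum.inl ⟨j, b, r⟩

theorem isWalk_branchEdges (j : Fin n) (b : Bool) :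
    IsWalk (redGraph n m C) (junction C j) (junction C (j + 1)) (branchEdges C j b) := by
  have h := isWalk_map_finRange (redGraph n m C) (branchVertex C j b) _
    fun r => ⟨redGraph_src_branch j b r, redGraph_tgt_branch j b r⟩
  rwa [branchVertex, if_pos rfl, branchVertex, if_neg (branchLen_pos j b).ne',
    dif_neg (lt_irrefl _)] at h

theorem mem_branchEdges_lab {j : Fin n} {b : Bool} {x : RedL n m}
    (hx : x ∈ (branchEdges C j b).map (redGraph n m C).lab) :
    x = Sum.inr (j, b) ∨ ∃ q : Fin m × Fin 3, x = Sum.inl q ∧ C q.1 q.2 = (j, b) := by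
  simp only [branchEdges, List.map_map, List.mem_map, Function.comp_apply] at hx
  obtain ⟨r, -, rfl⟩ := hx
  simp only [redGraph]
  split_ifs with h
  · exact Or.inl rfl
  · have hr : (r : ℕ) < (occList C j b).length := branchLen_eq_length h ▸ r.isLt
    rw [List.getD_eq_getElem _ _ hr]
    exact Or.inr ⟨_, rfl, mem_occList.1 (List.getElem_mem hr)⟩

theorem nodup_branchEdges_lab (j : Fin n) (b : Bool) :
    ((branchEdges C j b).map (redGraph n m C).lab).Nodup := by
  rw [branchEdges, List.map_map]
  refine List.Nodup.map_on (fun r _ r' _ hrr' => ?_) (List.nodup_finRange _)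
  simp only [Function.comp_apply, redGraph] at hrr'
  split_ifs at hrr' with h
  · have hlen : branchLen C j b = 1 := by simp [branchLen, h]
    exact Fin.ext (by omega)
  · have hr : (r : ℕ) < (occList C j b).length := branchLen_eq_length h ▸ r.isLt
    have hr' : (r' : ℕ) < (occList C j b).length := branchLen_eq_length h ▸ r'.isLt
    have hnodup : (occList C j b).Nodup :=
      ((List.nodup_finRange m).product (List.nodup_finRange 3)).filter _
    rw [List.getD_eq_getElem _ _ hr, List.getD_eq_getElem _ _ hr', Sum.inl.injEq] at hrr'
    exact Fin.ext (hnodup.getElem_inj_iff.1 hrr')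

def branchWalk (C : Fin m → Fin 3 → Fin n × Bool) (σ : Fin n → Bool) : List (RedE C) :=
  (List.finRange n).flatMap fun j => branchEdges C j (!σ j)

def clauseWalk (C : Fin m → Fin 3 → Fin n × Bool) (k : Fin m → Fin 3) : List (RedE C) :=
  (List.finRange m).map fun i => Sum.inr (i, k i)

theorem isWalk_branchWalk (σ : Fin n → Bool) :
    IsWalk (redGraph n m C) (junction C 0) (junction C n) (branchWalk C σ) :=
  isWalk_flatMap_finRange _ (junction C) _ fun j => isWalk_branchEdges j _

theorem isWalk_clauseWalk (k : Fin m → Fin 3) :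
    IsWalk (redGraph n m C) (junction C n) (junction C (n + m)) (clauseWalk C k) :=
  isWalk_map_finRange _ (fun a => junction C (n + a)) _
    fun i => ⟨redGraph_src_clause i _, redGraph_tgt_clause i _⟩

theorem nodup_branchWalk_lab (σ : Fin n → Bool) :
    ((branchWalk C σ).map (redGraph n m C).lab).Nodup := by
  rw [branchWalk, List.map_flatMap]
  refine List.nodup_flatMap_of_index (Sum.elim (fun q => (C q.1 q.2).1) Prod.fst)
    (List.nodup_finRange n) (fun j _ => nodup_branchEdges_lab j _) fun j _ x hx => ?_
  rcases mem_branchEdges_lab hx with rfl | ⟨q, rfl, hq⟩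
  · rfl
  · simp [hq]

theorem ne_of_inl_mem_branchWalk_lab {σ : Fin n → Bool} {q : Fin m × Fin 3}
    (hq : Sum.inl q ∈ (branchWalk C σ).map (redGraph n m C).lab) :
    σ (C q.1 q.2).1 ≠ (C q.1 q.2).2 := by
  simp only [branchWalk, List.map_flatMap, List.mem_flatMap] at hq
  obtain ⟨j, -, hq⟩ := hq
  rcases mem_branchEdges_lab hq with h | ⟨q', h, hq'⟩
  · cases h
  · obtain rfl := Sum.inl.inj h
    simp [hq']

theorem feasible_walk_of_satisfiable (σ : Fin n → Bool)
    (hσ : ∀ i, ∃ k, σ (C i k).1 = (C i k).2) :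
    ∃ p, IsWalk (redGraph n m C) (redS n m C) (redT n m C) p ∧ Feasible (redGraph n m C) p := by
  choose k hk using hσ
  refine ⟨branchWalk C σ ++ clauseWalk C k, ?_, ?_⟩
  · rw [redS_eq_junction, redT_eq_junction]
    exact isWalk_append _ (isWalk_branchWalk σ) (isWalk_clauseWalk k)
  · have hclause : (clauseWalk C k).map (redGraph n m C).lab =
        (List.finRange m).map fun i => Sum.inl (i, k i) := by
      simp only [clauseWalk, List.map_map]
      rfl
    rw [Feasible, List.map_append, List.nodup_append, hclause]
    refine ⟨nodup_branchWalk_lab σ,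
      (List.nodup_finRange m).map fun i i' h => congrArg Prod.fst (Sum.inl.inj h), ?_⟩
    rintro x hx y hy rfl
    obtain ⟨i, -, rfl⟩ := List.mem_map.1 hy
    exact ne_of_inl_mem_branchWalk_lab hx (hk i)

end Reduction

/-- There is an `s`-`t` path with pairwise distinct edge labels in the reduction
graph if and only if the 3-SAT instance is satisfiable. -/
theorem redGraph_feasible_path_iff_satisfiable (n m : ℕ)
    (C : Fin m → Fin 3 → Fin n × Bool) :
    (∃ p : List (RedE C),
        IsWalk (redGraph n m C) (redS n m C) (redT n m C) p ∧
        Feasible (redGraph n m C) p) ↔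
    (∃ σ : Fin n → Bool, ∀ i : Fin m, ∃ k : Fin 3, σ (C i k).1 = (C i k).2) :=
  ⟨fun ⟨_, hw, hf⟩ => satisfiable_of_feasible_walk hw hf,
    fun ⟨σ, hσ⟩ => feasible_walk_of_satisfiable σ hσ⟩
end

section
/- In the 3-SAT reduction graph, every path from s to t must, for each variable x_j, traverse exactly one of the two branches (positive or negative) of the variable gadget for x_j, and for each clause C_i, traverse exactly one of the three parallel clause edges of C_i. -/
variable {V E L : Type}

/-! Give each vertex the index of the gadget it sits in: the junction `u_v` (resp. `w_i`) has
level `v` (resp. `n + i`), an internal vertex of a branch of `x_j` has level `j`. Levels never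
decrease along an edge, so a walk from a junction of level `v` only uses edges of level `≥ v`.
The edges leaving the junction of level `v` all enter the gadget of level `v`, and an internal
vertex of a branch has a single out-edge, so from that junction a walk to `t` runs through one
whole branch (resp. one clause edge) to the next junction. The edges of level `v` of an `s`-`t`
walk are therefore exactly one branch of `x_j`, resp. one clause edge of `C_i`. -/

theorem IsWalk.le_of_mem {α : Type*} [Preorder α] {G : LabeledGraph V E L} {f : V → α}
    (hf : ∀ e, f (G.src e) ≤ f (G.tgt e)) :
    ∀ {s t : V} {p : List E}, IsWalk G s t p → ∀ e ∈ p, f s ≤ f (G.src e)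
  | _, _, [], _, _, he => absurd he List.not_mem_nil
  | _, _, e :: _, ⟨hs, hes⟩, e', he' => by
    subst hs
    rcases List.mem_cons.mp he' with rfl | he'
    · exact le_rfl
    · exact (hf e).trans (hes.le_of_mem hf e' he')

section RedGraph

variable {n m : ℕ} {C : Fin m → Fin 3 → Fin n × Bool}

def vertexLevel : RedV C → ℕ
  | Sum.inl v => v
  | Sum.inr ⟨j, _, _⟩ => j

def edgeLevel : RedE C → ℕ
  | Sum.inl ⟨j, _, _⟩ => j
  | Sum.inr (i, _) => n + i

lemma vertexLevel_src (e : RedE C) : vertexLevel ((redGraph n m C).src e) = edgeLevel e := by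
  rcases e with ⟨j, b, r⟩ | ⟨i, k⟩
  · simp only [redGraph]; split_ifs <;> rfl
  · rfl

lemma edgeLevel_le_vertexLevel_tgt (e : RedE C) :
    edgeLevel e ≤ vertexLevel ((redGraph n m C).tgt e) := by
  rcases e with ⟨j, b, r⟩ | ⟨i, k⟩
  · simp only [redGraph]; split_ifs <;> simp [vertexLevel, edgeLevel]
  · simp [redGraph, vertexLevel, edgeLevel]

lemma IsWalk.vertexLevel_le_edgeLevel {x t : RedV C} {p : List (RedE C)}
    (hp : IsWalk (redGraph n m C) x t p) {e : RedE C} (he : e ∈ p) :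
    vertexLevel x ≤ edgeLevel e :=
  vertexLevel_src e ▸ hp.le_of_mem
    (fun e => vertexLevel_src e ▸ edgeLevel_le_vertexLevel_tgt e) e he

lemma redGraph_src_eq_inr {e : RedE C} {j : Fin n} {b : Bool} {r : Fin (branchLen C j b)}
    (h : (redGraph n m C).src e = Sum.inr ⟨j, b, r⟩) :
    ∃ hr : r.val + 1 < branchLen C j b, e = Sum.inl ⟨j, b, ⟨r + 1, hr⟩⟩ := by
  rcases e with ⟨j', b', r', hr'⟩ | ⟨i, k⟩
  · simp only [redGraph] at h
    split_ifs at h with hr0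
    obtain ⟨rfl, h⟩ := Sigma.mk.inj_iff.mp (Sum.inr_injective h)
    obtain ⟨rfl, h⟩ := Sigma.mk.inj_iff.mp (eq_of_heq h)
    obtain rfl := eq_of_heq h
    refine ⟨by simp; omega, ?_⟩
    simp
    omega
  · simp [redGraph] at h

lemma redGraph_src_eq_inl_of_lt {e : RedE C} (j : Fin n)
    (h : (redGraph n m C).src e = Sum.inl ⟨j, by omega⟩) :
    ∃ b, e = Sum.inl ⟨j, b, ⟨0, Nat.le_max_left _ _⟩⟩ := by
  rcases e with ⟨j', b', r'⟩ | ⟨i, k⟩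
  · simp only [redGraph] at h
    split_ifs at h with hr0
    obtain rfl : j' = j := Fin.ext (by simpa using h)
    exact ⟨b', congrArg (fun r : Fin (branchLen C j' b') => (Sum.inl ⟨j', b', r⟩ : RedE C))
      (Fin.ext hr0)⟩
  · simp [redGraph] at h
    omega

lemma redGraph_src_eq_inl_add {e : RedE C} (i : Fin m)
    (h : (redGraph n m C).src e = Sum.inl ⟨n + i, by omega⟩) : ∃ k, e = Sum.inr (i, k) := by
  rcases e with ⟨j', b', r'⟩ | ⟨i', k⟩
  · simp only [redGraph] at h
    split_ifs at h
    simp at h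
    omega
  · obtain rfl : i' = i := Fin.ext (by simpa [redGraph] using h)
    exact ⟨k, rfl⟩

variable (C) in
def branchFrom (j : Fin n) (b : Bool) (r₀ : ℕ) : List (RedE C) :=
  ((List.finRange (branchLen C j b)).drop r₀).map fun r => Sum.inl ⟨j, b, r⟩

lemma branchFrom_eq_cons {j : Fin n} {b : Bool} (r : Fin (branchLen C j b)) :
    branchFrom C j b r = Sum.inl ⟨j, b, r⟩ :: branchFrom C j b (r + 1) := by
  rw [branchFrom, List.drop_eq_getElem_cons (by simp), List.map_cons, List.getElem_finRange]
  rfl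

lemma branchFrom_eq_nil {j : Fin n} {b : Bool} {r₀ : ℕ} (h : branchLen C j b ≤ r₀) :
    branchFrom C j b r₀ = [] := by
  simp [branchFrom, h]

lemma mem_branchFrom_zero {j : Fin n} {b : Bool} (r : Fin (branchLen C j b)) :
    Sum.inl ⟨j, b, r⟩ ∈ branchFrom C j b 0 := by
  simp [branchFrom]

lemma edgeLevel_of_mem_branchFrom {j : Fin n} {b : Bool} {r₀ : ℕ} {e : RedE C}
    (he : e ∈ branchFrom C j b r₀) : edgeLevel e = j := by
  obtain ⟨r, -, rfl⟩ := List.mem_map.mp he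
  rfl

lemma not_mem_branchFrom_not {j : Fin n} {b : Bool} {r₀ : ℕ} (r : Fin (branchLen C j (!b))) :
    Sum.inl ⟨j, !b, r⟩ ∉ branchFrom C j b r₀ := by
  intro h
  obtain ⟨r', -, h⟩ := List.mem_map.mp h
  simp at h

lemma IsWalk.eq_branchFrom_append_of_tgt {j : Fin n} {b : Bool} (r : Fin (branchLen C j b))
    {p : List (RedE C)}
    (hp : IsWalk (redGraph n m C) ((redGraph n m C).tgt (Sum.inl ⟨j, b, r⟩)) (redT n m C) p) :
    ∃ q, p = branchFrom C j b (r + 1) ++ q ∧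
      IsWalk (redGraph n m C) (Sum.inl ⟨j + 1, by omega⟩) (redT n m C) q := by
  by_cases hlast : r.val = branchLen C j b - 1
  · have htgt : (redGraph n m C).tgt (Sum.inl ⟨j, b, r⟩) = Sum.inl ⟨j + 1, by omega⟩ := by
      simp [redGraph, hlast]
    exact ⟨p, by rw [branchFrom_eq_nil (by omega), List.nil_append], htgt ▸ hp⟩
  · have htgt : (redGraph n m C).tgt (Sum.inl ⟨j, b, r⟩) = Sum.inr ⟨j, b, r⟩ := by
      simp [redGraph, hlast]
    rw [htgt] at hp
    rcases p with _ | ⟨e, p⟩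
    · simp [IsWalk, redT] at hp
    obtain ⟨hsrc, hp⟩ := hp
    obtain ⟨hr, rfl⟩ := redGraph_src_eq_inr hsrc
    obtain ⟨q, rfl, hq⟩ := hp.eq_branchFrom_append_of_tgt ⟨r + 1, hr⟩
    exact ⟨q, by rw [branchFrom_eq_cons ⟨r + 1, hr⟩]; rfl, hq⟩
termination_by branchLen C j b - r

lemma IsWalk.eq_branchFrom_append {j : Fin n} {p : List (RedE C)}
    (hp : IsWalk (redGraph n m C) (Sum.inl ⟨j, by omega⟩) (redT n m C) p) :
    ∃ b q, p = branchFrom C j b 0 ++ q ∧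
      IsWalk (redGraph n m C) (Sum.inl ⟨j + 1, by omega⟩) (redT n m C) q := by
  rcases p with _ | ⟨e, p⟩
  · simp [IsWalk, redT] at hp
    omega
  obtain ⟨hsrc, hp⟩ := hp
  obtain ⟨b, rfl⟩ := redGraph_src_eq_inl_of_lt j hsrc
  obtain ⟨q, rfl, hq⟩ := hp.eq_branchFrom_append_of_tgt _
  exact ⟨b, q, by rw [branchFrom_eq_cons ⟨0, _⟩]; rfl, hq⟩

lemma IsWalk.eq_clauseEdge_cons {i : Fin m} {p : List (RedE C)}
    (hp : IsWalk (redGraph n m C) (Sum.inl ⟨n + i, by omega⟩) (redT n m C) p) :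
    ∃ k q, p = Sum.inr (i, k) :: q ∧
      IsWalk (redGraph n m C) (Sum.inl ⟨n + i + 1, by omega⟩) (redT n m C) q := by
  rcases p with _ | ⟨e, q⟩
  · simp [IsWalk, redT] at hp
    omega
  obtain ⟨hsrc, hq⟩ := hp
  obtain ⟨k, rfl⟩ := redGraph_src_eq_inl_add i hsrc
  exact ⟨k, q, rfl, hq⟩

lemma IsWalk.exists_append_walk_from_succ {v : ℕ} (hv : v < n + m) {p : List (RedE C)}
    (hp : IsWalk (redGraph n m C) (Sum.inl ⟨v, by omega⟩) (redT n m C) p) :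
    ∃ seg q, p = seg ++ q ∧ (∀ e ∈ seg, edgeLevel e = v) ∧
      IsWalk (redGraph n m C) (Sum.inl ⟨v + 1, by omega⟩) (redT n m C) q := by
  by_cases hvn : v < n
  · obtain ⟨b, q, rfl, hq⟩ := IsWalk.eq_branchFrom_append (j := ⟨v, hvn⟩) hp
    exact ⟨_, q, rfl, fun e he => edgeLevel_of_mem_branchFrom he, hq⟩
  · obtain ⟨i, rfl⟩ : ∃ i : Fin m, n + i = v := ⟨⟨v - n, by omega⟩, by simp; omega⟩
    obtain ⟨k, q, rfl, hq⟩ := hp.eq_clauseEdge_cons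
    exact ⟨[Sum.inr (i, k)], q, rfl, by simp [edgeLevel], hq⟩

lemma IsWalk.exists_append_walk_from_junction {p : List (RedE C)}
    (hp : IsWalk (redGraph n m C) (redS n m C) (redT n m C) p) :
    ∀ (v : ℕ) (hv : v ≤ n + m), ∃ p₁ p₂, p = p₁ ++ p₂ ∧ (∀ e ∈ p₁, edgeLevel e < v) ∧
      IsWalk (redGraph n m C) (Sum.inl ⟨v, by omega⟩) (redT n m C) p₂
  | 0, _ => ⟨[], p, rfl, by simp, hp⟩
  | v + 1, hv => by
    obtain ⟨p₁, p₂, rfl, hp₁, hp₂⟩ := hp.exists_append_walk_from_junction v (by omega)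
    obtain ⟨seg, q, rfl, hseg, hq⟩ := hp₂.exists_append_walk_from_succ (by omega)
    refine ⟨p₁ ++ seg, q, (List.append_assoc ..).symm, ?_, hq⟩
    simp only [List.mem_append]
    rintro e (he | he)
    · have := hp₁ e he
      omega
    · have := hseg e he
      omega

lemma IsWalk.exists_branch {p : List (RedE C)}
    (hp : IsWalk (redGraph n m C) (redS n m C) (redT n m C) p) (j : Fin n) :
    ∃ b : Bool, (∀ r : Fin (branchLen C j b), Sum.inl ⟨j, b, r⟩ ∈ p) ∧
      (∀ r : Fin (branchLen C j (!b)), Sum.inl ⟨j, !b, r⟩ ∉ p) := by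
  obtain ⟨p₁, p₂, rfl, hp₁, hp₂⟩ := hp.exists_append_walk_from_junction j (by omega)
  obtain ⟨b, q, rfl, hq⟩ := hp₂.eq_branchFrom_append
  refine ⟨b, fun r => by simp [mem_branchFrom_zero], fun r hr => ?_⟩
  simp only [List.mem_append] at hr
  rcases hr with h | h | h
  · simpa [edgeLevel] using hp₁ _ h
  · exact not_mem_branchFrom_not r h
  · simpa [vertexLevel, edgeLevel] using hq.vertexLevel_le_edgeLevel h

lemma IsWalk.existsUnique_clauseEdge {p : List (RedE C)}
    (hp : IsWalk (redGraph n m C) (redS n m C) (redT n m C) p) (i : Fin m) :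
    ∃! k : Fin 3, Sum.inr (i, k) ∈ p := by
  obtain ⟨p₁, p₂, rfl, hp₁, hp₂⟩ := hp.exists_append_walk_from_junction (n + i) (by omega)
  obtain ⟨k, q, rfl, hq⟩ := hp₂.eq_clauseEdge_cons
  refine ⟨k, by simp, fun k' hk' => ?_⟩
  simp only [List.mem_append, List.mem_cons] at hk'
  rcases hk' with h | h | h
  · simpa [edgeLevel] using hp₁ _ h
  · simpa using h
  · simpa [vertexLevel, edgeLevel] using hq.vertexLevel_le_edgeLevel h

end RedGraph

/-- Every `s`-`t` path in the reduction graph traverses, for each variable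
`x_j`, exactly one of the two branches of its variable gadget (all edges of one
branch and no edge of the other), and, for each clause `C_i`, exactly one of
its three parallel clause edges. -/
theorem redGraph_path_structure (n m : ℕ) (C : Fin m → Fin 3 → Fin n × Bool)
    (p : List (RedE C))
    (hwalk : IsWalk (redGraph n m C) (redS n m C) (redT n m C) p) :
    (∀ j : Fin n, ∃ b : Bool,
        (∀ r : Fin (branchLen C j b), Sum.inl ⟨j, b, r⟩ ∈ p) ∧
        (∀ r : Fin (branchLen C j (!b)), Sum.inl ⟨j, !b, r⟩ ∉ p)) ∧
    (∀ i : Fin m, ∃! k : Fin 3, Sum.inr (i, k) ∈ p) :=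
  ⟨hwalk.exists_branch, hwalk.existsUnique_clauseEdge⟩
end

section
/- Conversely, if the 3-SAT reduction graph admits an s-t path with pairwise distinct edge labels, then the assignment σ defined by σ(x_j) = true iff the path traverses the negative branch of the variable gadget for x_j satisfies every clause of the 3-SAT instance. -/
variable {V E L : Type}

/-! A walk from `s` to `t` must climb through every level, so it uses some edge of the gadget
of each variable `x_j` and some edge `(i, k)` of each clause gadget. Consecutive edges of a branch
are joined by a vertex of in- and out-degree one, so a walk using one edge of a branch uses all of
them; in particular, if `C i k = (j, b)`, a walk through the clause edge `(i, k)` with distinct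
labels avoids the whole branch `(j, b)`, which carries the label `(i, k)` too. It therefore takes
the branch `(j, !b)`, i.e. `σ x_j = b`. -/

namespace IsWalk

variable {G : LabeledGraph V E L} {s t : V} {p : List E}

theorem exists_mem_src_eq_tgt (hw : IsWalk G s t p) {e : E} (he : e ∈ p)
    (hne : G.tgt e ≠ t) : ∃ e' ∈ p, G.src e' = G.tgt e := by
  induction p generalizing s with
  | nil => cases he
  | cons a es ih =>
    obtain ⟨-, hw'⟩ := hw
    rcases List.mem_cons.mp he with rfl | he
    · cases es with
      | nil => exact absurd hw' hne
      | cons a' es' => exact ⟨a', by simp, hw'.1⟩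
    · obtain ⟨e', he', h⟩ := ih hw' he
      exact ⟨e', List.mem_cons_of_mem _ he', h⟩

theorem exists_mem_tgt_eq_src (hw : IsWalk G s t p) {e : E} (he : e ∈ p)
    (hne : G.src e ≠ s) : ∃ e' ∈ p, G.tgt e' = G.src e := by
  induction p generalizing s with
  | nil => cases he
  | cons a es ih =>
    obtain ⟨hsrc, hw'⟩ := hw
    rcases List.mem_cons.mp he with rfl | he
    · exact absurd hsrc hne
    · by_cases h : G.src e = G.tgt a
      · exact ⟨a, List.mem_cons_self, h.symm⟩
      · obtain ⟨e', he', h'⟩ := ih hw' he h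
        exact ⟨e', List.mem_cons_of_mem _ he', h'⟩

theorem exists_mem_src_eq_of_le_lt (f : V → ℕ) (hstep : ∀ e, f (G.tgt e) ≤ f (G.src e) + 1)
    (hw : IsWalk G s t p) {v : ℕ} (hs : f s ≤ v) (ht : v < f t) :
    ∃ e ∈ p, f (G.src e) = v := by
  induction p generalizing s with
  | nil => cases hw; omega
  | cons e es ih =>
    obtain ⟨rfl, hw'⟩ := hw
    by_cases hle : f (G.tgt e) ≤ v
    · obtain ⟨e', he', hlevel⟩ := ih hw' hle
      exact ⟨e', List.mem_cons_of_mem _ he', hlevel⟩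
    · exact ⟨e, List.mem_cons_self, by have := hstep e; omega⟩

end IsWalk

theorem Fin.iff_of_iff_of_val_eq_succ {N : ℕ} {P : Fin N → Prop}
    (h : ∀ a b : Fin N, b.val = a.val + 1 → (P a ↔ P b)) (a b : Fin N) : P a ↔ P b := by
  have hN : 0 < N := a.pos
  suffices key : ∀ k (hk : k < N), P ⟨k, hk⟩ ↔ P ⟨0, hN⟩ from
    (key a a.isLt).trans (key b b.isLt).symm
  intro k
  induction k with
  | zero => intro _; rfl
  | succ k ih => intro hk; exact (h ⟨k, by omega⟩ ⟨k + 1, hk⟩ rfl).symm.trans (ih _)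

namespace redGraph

variable {n m : ℕ} {C : Fin m → Fin 3 → Fin n × Bool} {p : List (RedE C)}

def level : RedV C → ℕ
  | Sum.inl u => u.val
  | Sum.inr ⟨j, _, _⟩ => j.val

theorem level_src_inl (j : Fin n) (b : Bool) (r : Fin (branchLen C j b)) :
    level ((redGraph n m C).src (Sum.inl ⟨j, b, r⟩)) = j := by
  simp only [redGraph]; split <;> rfl

theorem level_src_inr (i : Fin m) (k : Fin 3) :
    level ((redGraph n m C).src (Sum.inr (i, k))) = n + i := rfl

theorem level_tgt_le (e : RedE C) :
    level ((redGraph n m C).tgt e) ≤ level ((redGraph n m C).src e) + 1 := by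
  rcases e with ⟨j, b, r⟩ | ⟨i, k⟩
  · rw [level_src_inl]; simp only [redGraph]; split <;> simp [level]
  · exact le_rfl

theorem tgt_inl_of_val_eq_succ {j : Fin n} {b : Bool} {r r' : Fin (branchLen C j b)}
    (h : r'.val = r.val + 1) :
    (redGraph n m C).tgt (Sum.inl ⟨j, b, r⟩) = Sum.inr ⟨j, b, r⟩ := by
  simp only [redGraph]; rw [if_neg (by omega)]

theorem src_inl_of_val_eq_succ {j : Fin n} {b : Bool} {r r' : Fin (branchLen C j b)}
    (h : r'.val = r.val + 1) :
    (redGraph n m C).src (Sum.inl ⟨j, b, r'⟩) = Sum.inr ⟨j, b, r⟩ := by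
  simp only [redGraph]; rw [if_neg (by omega)]; congr; omega

theorem eq_of_src_eq_inr {e : RedE C} {j : Fin n} {b : Bool} {r r' : Fin (branchLen C j b)}
    (h : r'.val = r.val + 1) (he : (redGraph n m C).src e = Sum.inr ⟨j, b, r⟩) :
    e = Sum.inl ⟨j, b, r'⟩ := by
  rcases e with ⟨j', b', r''⟩ | ⟨i, k⟩
  · simp only [redGraph] at he
    split_ifs at he
    obtain ⟨rfl, he⟩ := Sigma.mk.inj_iff.mp (Sum.inr_injective he)
    obtain ⟨rfl, he⟩ := Sigma.mk.inj_iff.mp (eq_of_heq he)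
    have hval := congrArg Fin.val (eq_of_heq he)
    rw [show r'' = r' from Fin.ext (by simp only at hval; omega)]
  · cases he

theorem eq_of_tgt_eq_inr {e : RedE C} {j : Fin n} {b : Bool} {r : Fin (branchLen C j b)}
    (he : (redGraph n m C).tgt e = Sum.inr ⟨j, b, r⟩) :
    e = Sum.inl ⟨j, b, r⟩ := by
  rcases e with ⟨j', b', r''⟩ | ⟨i, k⟩
  · simp only [redGraph] at he
    split_ifs at he
    exact congrArg Sum.inl (Sum.inr_injective he)
  · cases he

theorem branch_mem_iff (hw : IsWalk (redGraph n m C) (redS n m C) (redT n m C) p)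
    {j : Fin n} {b : Bool} (r r' : Fin (branchLen C j b)) :
    Sum.inl ⟨j, b, r⟩ ∈ p ↔ Sum.inl ⟨j, b, r'⟩ ∈ p := by
  refine Fin.iff_of_iff_of_val_eq_succ (P := fun r => Sum.inl ⟨j, b, r⟩ ∈ p)
    (fun r r' h => ⟨fun hr => ?_, fun hr' => ?_⟩) r r'
  · have htgt := tgt_inl_of_val_eq_succ (m := m) h
    obtain ⟨e, he, hsrc⟩ := hw.exists_mem_src_eq_tgt hr (by rw [htgt]; simp [redT])
    rwa [eq_of_src_eq_inr h (hsrc.trans htgt)] at he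
  · have hsrc := src_inl_of_val_eq_succ (m := m) h
    obtain ⟨e, he, htgt⟩ := hw.exists_mem_tgt_eq_src hr' (by rw [hsrc]; simp [redS])
    rwa [eq_of_tgt_eq_inr (htgt.trans hsrc)] at he

theorem exists_clause_edge_mem (hw : IsWalk (redGraph n m C) (redS n m C) (redT n m C) p)
    (i : Fin m) : ∃ k, Sum.inr (i, k) ∈ p := by
  obtain ⟨e, he, hlevel⟩ := hw.exists_mem_src_eq_of_le_lt level level_tgt_le (v := n + i)
    (by simp [redS, level]) (by simp [redT, level])
  rcases e with ⟨j, b, r⟩ | ⟨i', k⟩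
  · rw [level_src_inl] at hlevel; omega
  · rw [level_src_inr] at hlevel
    obtain rfl : i' = i := Fin.ext (by omega)
    exact ⟨k, he⟩

theorem exists_branch_edge_mem (hw : IsWalk (redGraph n m C) (redS n m C) (redT n m C) p)
    (j : Fin n) : ∃ b r, Sum.inl ⟨j, b, r⟩ ∈ p := by
  obtain ⟨e, he, hlevel⟩ := hw.exists_mem_src_eq_of_le_lt level level_tgt_le (v := j)
    (by simp [redS, level]) (by simp [redT, level]; omega)
  rcases e with ⟨j', b, r⟩ | ⟨i, k⟩
  · rw [level_src_inl] at hlevel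
    obtain rfl : j' = j := Fin.ext hlevel
    exact ⟨b, r, he⟩
  · rw [level_src_inr] at hlevel; omega

theorem exists_branch_lab_eq_clause_lab {i : Fin m} {k : Fin 3} {j : Fin n} {b : Bool}
    (h : C i k = (j, b)) : ∃ r : Fin (branchLen C j b),
      (redGraph n m C).lab (Sum.inl ⟨j, b, r⟩) = (redGraph n m C).lab (Sum.inr (i, k)) := by
  have hmem : (i, k) ∈ occList C j b := by simp [occList, h]
  have hne : occList C j b ≠ [] := List.ne_nil_of_mem hmem
  obtain ⟨r, hr, hget⟩ := List.mem_iff_getElem.mp hmem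
  refine ⟨⟨r, by simp only [branchLen]; omega⟩, ?_⟩
  simp only [redGraph]
  rw [dif_neg hne, List.getD_eq_getElem _ _ hr, hget]

theorem branch_not_mem_of_clause_mem
    (hw : IsWalk (redGraph n m C) (redS n m C) (redT n m C) p)
    (hfeas : Feasible (redGraph n m C) p)
    {i : Fin m} {k : Fin 3} {j : Fin n} {b : Bool} (h : C i k = (j, b))
    (hk : Sum.inr (i, k) ∈ p) (r : Fin (branchLen C j b)) : Sum.inl ⟨j, b, r⟩ ∉ p := by
  intro hr
  obtain ⟨r₀, hlab⟩ := exists_branch_lab_eq_clause_lab h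
  have hr₀ := (branch_mem_iff hw r r₀).mp hr
  exact Sum.inl_ne_inr (List.inj_on_of_nodup_map hfeas hr₀ hk hlab)

end redGraph

/-- Conversely: if the reduction graph admits an `s`-`t` path with pairwise
distinct edge labels, then the assignment `σ`, defined by `σ x_j = true` iff
the path traverses (some edge of) the negative branch (polarity `false`) of the
variable gadget for `x_j`, satisfies every clause. -/
theorem redGraph_feasible_path_implies_satisfiable (n m : ℕ)
    (C : Fin m → Fin 3 → Fin n × Bool) (p : List (RedE C))
    (hwalk : IsWalk (redGraph n m C) (redS n m C) (redT n m C) p)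
    (hfeas : Feasible (redGraph n m C) p)
    (σ : Fin n → Bool)
    (hσ : ∀ j : Fin n,
      σ j = true ↔ ∃ r : Fin (branchLen C j false), Sum.inl ⟨j, false, r⟩ ∈ p) :
    ∀ i : Fin m, ∃ k : Fin 3, σ (C i k).1 = (C i k).2 := by
  intro i
  obtain ⟨k, hk⟩ := redGraph.exists_clause_edge_mem hwalk i
  refine ⟨k, ?_⟩
  rcases hC : C i k with ⟨j, b⟩
  have havoid := redGraph.branch_not_mem_of_clause_mem hwalk hfeas hC hk
  obtain ⟨b', r', hr'⟩ := redGraph.exists_branch_edge_mem hwalk j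
  cases b
  · simpa [havoid] using hσ j
  · cases b'
    · exact (hσ j).mpr ⟨r', hr'⟩
    · exact absurd hr' (havoid r')
end
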